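/- Suppose n is even and k = n/2. Let X ∈ 𝔽_{q^m}^{k×k} be a circulant matrix. Then the minimum rank distance of the code C_X is at most 2. In particular, if n ≥ 4, then C_X is not MRD. -/

import Mathlib

open Finset

/-- The explicit trace map of `𝔽_{q^m}/𝔽_q`: `Tr(x) = ∑_{i=0}^{m-1} x^{q^i}`. -/
def fieldTrace (q m : ℕ) {L : Type*} [Field L] (x : L) : L :=
  ∑ i ∈ Finset.range m, x ^ q ^ i

/-- The `q`-rank of a vector with entries in `L`: the `K`-dimension of the
`K`-span of its entries. -/
noncomputable def rkq (K : Type*) {L : Type*} [Field K] [Field L] [Algebra K L]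
    {ι : Type*} (v : ι → L) : ℕ :=
  Module.finrank K (Submodule.span K (Set.range v))

/-- The code `C_X`: the `L`-row space of the matrix `(I_k | X)`. -/
noncomputable def CX {L : Type*} [Field L] {k r : ℕ} (X : Matrix (Fin k) (Fin r) L) :
    Submodule L (Fin (k + r) → L) :=
  Submodule.span L (Set.range fun i : Fin k =>
    Matrix.reindex (Equiv.refl (Fin k)) finSumFinEquiv
      (Matrix.fromCols (1 : Matrix (Fin k) (Fin k) L) X) i)

/-- The minimum rank distance of a linear code `C`. -/
noncomputable def minRankDist (K : Type*) {L : Type*} [Field K] [Field L] [Algebra K L]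
    {n : ℕ} (C : Submodule L (Fin n → L)) : ℕ :=
  sInf {d : ℕ | ∃ c ∈ C, c ≠ 0 ∧ rkq K c = d}

/-- `C` is a generalized Gabidulin code of parameter `s` and dimension `k`:
it is the `L`-row space of an `s`-Moore matrix `M_{s,k}(g)` for some `g` of full `q`-rank. -/
def IsGabidulin (K : Type*) {L : Type*} [Field K] [Field L] [Algebra K L]
    (q s k : ℕ) {n : ℕ} (C : Submodule L (Fin n → L)) : Prop :=
  ∃ g : Fin n → L, rkq K g = n ∧
    C = Submodule.span L (Set.range fun i : Fin k => fun j => g j ^ q ^ (s * (i : ℕ)))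

/-- The map `Φ_s` applying `x ↦ x^{q^s} - x` entrywise to a matrix. -/
def PhiS (q s : ℕ) {L : Type*} [Field L] {k r : ℕ} (X : Matrix (Fin k) (Fin r) L) :
    Matrix (Fin k) (Fin r) L :=
  Matrix.of fun i j => X i j ^ q ^ s - X i j

/-- A matrix is superregular if all of its minors are nonzero. -/
def Superregular {L : Type*} [Field L] {a b : ℕ} (M : Matrix (Fin a) (Fin b) L) : Prop :=
  ∀ (t : ℕ) (f : Fin t → Fin a) (g : Fin t → Fin b),
    StrictMono f → StrictMono g → (M.submatrix f g).det ≠ 0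

/-! The all-ones combination of the rows of `(I_k | X)` has entries `1` and the column sums of
`X`. The entries of a circulant `X` depend only on `j - i`, so all its column sums equal a single
`σ`; the codeword then has its entries in `{1, σ}` and hence `q`-rank at most `2`. -/

open Matrix

theorem Fin.val_add_sub_mod_eq_val_sub {k : ℕ} (i j : Fin k) :
    ((j : ℕ) + k - i) % k = ((j - i : Fin k) : ℕ) := by
  rw [Fin.val_sub]
  congr 1
  omega

theorem Matrix.sum_apply_eq_sum_apply_of_sub_eq {G R : Type*} [AddCommGroup G] [Fintype G]
    [AddCommMonoid R] (X : Matrix G G R)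
    (hX : ∀ i j i' j', j - i = j' - i' → X i j = X i' j') (j j' : G) :
    ∑ i, X i j = ∑ i, X i j' :=
  Fintype.sum_equiv (Equiv.addRight (j' - j)) _ _ fun i => hX _ _ _ _ (by simp only [Equiv.coe_addRight]; abel)

theorem minRankDist_le_rkq {K L : Type*} [Field K] [Field L] [Algebra K L] {n : ℕ}
    {C : Submodule L (Fin n → L)} {c : Fin n → L} (hc : c ∈ C) (hc0 : c ≠ 0) :
    minRankDist K C ≤ rkq K c :=
  Nat.sInf_le ⟨c, hc, hc0, rfl⟩

theorem rkq_le_two_of_forall_eq_or_eq {K L ι : Type*} [Field K] [Field L] [Algebra K L]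
    {v : ι → L} {a b : L} (hv : ∀ i, v i = a ∨ v i = b) : rkq K v ≤ 2 := by
  classical
  have hrange : Set.range v ⊆ (({a, b} : Finset L) : Set L) := by
    rintro _ ⟨i, rfl⟩
    rcases hv i with h | h <;> simp [h]
  calc rkq K v ≤ Module.finrank K (Submodule.span K (({a, b} : Finset L) : Set L)) :=
        Submodule.finrank_mono (Submodule.span_mono hrange)
    _ ≤ #{a, b} := finrank_span_finset_le_card _
    _ ≤ 2 := card_le_two

theorem vecMul_mem_CX {L : Type*} [Field L] {k r : ℕ} (X : Matrix (Fin k) (Fin r) L)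
    (a : Fin k → L) : Sum.elim a (a ᵥ* X) ∘ finSumFinEquiv.symm ∈ CX X := by
  rw [CX, ← row_def, ← range_vecMulLinear]
  refine ⟨a, ?_⟩
  rw [vecMulLinear_apply, reindex_apply, submatrix_vecMul_equiv, vecMul_fromCols, vecMul_one]
  rfl

theorem stmt19_general {K L : Type*} [Field K] [Field L] [Algebra K L]
    (k : ℕ) (hk : 0 < k)
    (X : Matrix (Fin k) (Fin k) L)
    (hcirc : ∀ (i j i' j' : Fin k),
      ((j : ℕ) + k - (i : ℕ)) % k = ((j' : ℕ) + k - (i' : ℕ)) % k → X i j = X i' j') :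
    minRankDist K (CX X) ≤ 2 ∧ (2 ≤ k → minRankDist K (CX X) ≠ k + 1) := by
  have : NeZero k := ⟨hk.ne'⟩
  have hcol : ∀ j j', ∑ i, X i j = ∑ i, X i j' :=
    X.sum_apply_eq_sum_apply_of_sub_eq fun i j i' j' h => hcirc i j i' j' <| by
      rw [Fin.val_add_sub_mod_eq_val_sub, Fin.val_add_sub_mod_eq_val_sub, h]
  set c : Fin (k + k) → L := Sum.elim (1 : Fin k → L) (1 ᵥ* X) ∘ finSumFinEquiv.symm
  have hc0 : c ≠ 0 := fun h => by
    simpa [c] using congrFun h (finSumFinEquiv (Sum.inl 0))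
  have hentries : ∀ j, c j = 1 ∨ c j = ∑ i, X i 0 := by
    intro j
    simp only [c, Function.comp_apply]
    rcases finSumFinEquiv.symm j with i | i
    · exact .inl rfl
    · exact .inr (by simpa [vecMul, one_dotProduct] using hcol i 0)
  have hmin : minRankDist K (CX X) ≤ 2 :=
    (minRankDist_le_rkq (vecMul_mem_CX X 1) hc0).trans (rkq_le_two_of_forall_eq_or_eq hentries)
  exact ⟨hmin, fun _ _ => by omega⟩

/-- for `n = 2k` (even) and `X ∈ 𝔽_{q^m}^{k×k}` circulant, the minimum rank
distance of `C_X` is at most 2; in particular if `n ≥ 4` (i.e. `k ≥ 2`) then `C_X` is not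
MRD (its minimum rank distance is not `n - k + 1 = k + 1`). -/
theorem stmt19 {K L : Type*} [Field K] [Field L] [Algebra K L] [Fintype K] [Fintype L]
    (q m k : ℕ) (hq : Fintype.card K = q) (hm : Module.finrank K L = m)
    (hk : 0 < k) (hnm : k + k ≤ m)
    (X : Matrix (Fin k) (Fin k) L)
    (hcirc : ∀ (i j i' j' : Fin k),
      ((j : ℕ) + k - (i : ℕ)) % k = ((j' : ℕ) + k - (i' : ℕ)) % k → X i j = X i' j') :
    minRankDist K (CX X) ≤ 2 ∧ (2 ≤ k → minRankDist K (CX X) ≠ k + 1) :=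
  stmt19_general k hk X hcirc
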